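/- For every natural number n there exists an injective group homomorphism from the free group FreeGroup(Fin n) on n generators into SU(2); i.e., SU(2) contains a subgroup freely generated by n elements. -/

import Mathlib

/-- `SU2` is the special unitary group SU(2): the group of 2×2 complex unitary
matrices with determinant 1, realized as a subgroup of the unitary group. -/
def SU2 : Subgroup (Matrix.unitaryGroup (Fin 2) ℂ) where
  carrier := {A | (A : Matrix (Fin 2) (Fin 2) ℂ).det = 1}
  one_mem' := by simp
  mul_mem' := by
    intro a b ha hb
    simp only [Set.mem_setOf_eq] at *
    show ((a : Matrix (Fin 2) (Fin 2) ℂ) * (b : Matrix (Fin 2) (Fin 2) ℂ)).det = 1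
    rw [Matrix.det_mul, ha, hb, one_mul]
  inv_mem' := by
    intro a ha
    simp only [Set.mem_setOf_eq] at *
    show ((a⁻¹ : Matrix.unitaryGroup (Fin 2) ℂ) : Matrix (Fin 2) (Fin 2) ℂ).det = 1
    rw [Matrix.UnitaryGroup.inv_val, Matrix.star_eq_conjTranspose, Matrix.det_conjTranspose, ha,
      star_one]

/-- The underlying 2×2 complex matrix of an element of SU(2). -/
def SU2.toMatrix (g : SU2) : Matrix (Fin 2) (Fin 2) ℂ := g.val.val

/-- The trace of (the matrix of) an element of SU(2). -/
noncomputable def SU2.trace (g : SU2) : ℂ := Matrix.trace (SU2.toMatrix g)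

/-!
The matrices `A = diag (3 + 4i, 3 - 4i) / 5` and `B = !![3, 4; -4, 3] / 5` lie in SU(2), and their
numerators reduce modulo the prime `2 + i` of `ℤ[i]` to rank-one matrices over `𝔽₅`. So on the
vectors of `ℂ²` proportional to Gaussian-integer vectors, each of which has a reduction in
`ℙ¹(𝔽₅)`, each of `A`, `B`, `B⁻¹` sends everything off a kernel line onto a single image line.
These lines give ping-pong sets for the conjugates `Aⁱ B A⁻ⁱ`, `i ∈ ℕ`, which therefore freely
generate a subgroup of SU(2) of countable rank.
-/

open Matrix GaussianInt Projectivization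
open scoped LinearAlgebra.Projectivization Pointwise

theorem EuclideanDomain.exists_eq_smul_not_dvd {R : Type*} [EuclideanDomain R] {p : R}
    (hp : ¬IsUnit p) {u : Fin 2 → R} (hu : u ≠ 0) :
    ∃ (g : R) (w : Fin 2 → R), u = g • w ∧ ¬(p ∣ w 0 ∧ p ∣ w 1) := by
  classical
  set g := EuclideanDomain.gcd (u 0) (u 1)
  have hg : g ≠ 0 := by
    rw [Ne, EuclideanDomain.gcd_eq_zero_iff]
    contrapose! hu
    ext j; fin_cases j <;> simp [hu]
  have hgu : ∀ j, u j = g * (u j / g) := fun j =>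
    (EuclideanDomain.mul_div_cancel' hg (by
      fin_cases j
      exacts [EuclideanDomain.gcd_dvd_left _ _, EuclideanDomain.gcd_dvd_right _ _])).symm
  refine ⟨g, fun j => u j / g, funext hgu, fun ⟨h0, h1⟩ => hp ?_⟩
  have hgp : g * p ∣ g :=
    EuclideanDomain.dvd_gcd (hgu 0 ▸ mul_dvd_mul_left g h0) (hgu 1 ▸ mul_dvd_mul_left g h1)
  exact isUnit_of_dvd_one ((mul_dvd_mul_iff_left hg).mp (by rwa [mul_one]))

theorem Projectivization.mk_eq_mk_iff_mul_eq_mul {K : Type*} [Field K] {x y : Fin 2 → K}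
    (hx : x ≠ 0) (hy : y ≠ 0) : mk K x hx = mk K y hy ↔ x 0 * y 1 = x 1 * y 0 := by
  rw [mk_eq_mk_iff]
  constructor
  · rintro ⟨a, rfl⟩
    simp only [Pi.smul_apply, Units.smul_def, smul_eq_mul]
    ring
  · intro h
    have snd_ne_zero {z : Fin 2 → K} (hz : z ≠ 0) (h0 : z 0 = 0) : z 1 ≠ 0 := fun h1 =>
      hz (by ext j; fin_cases j <;> simp [h0, h1])
    by_cases hy0 : y 0 = 0
    · have hx0 : x 0 = 0 := by simpa [hy0, snd_ne_zero hy hy0] using h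
      refine ⟨Units.mk0 (x 1 / y 1) (div_ne_zero (snd_ne_zero hx hx0) (snd_ne_zero hy hy0)), ?_⟩
      refine funext (Fin.forall_fin_two.mpr ⟨?_, ?_⟩)
      · simp [hx0, hy0]
      · simp [div_mul_cancel₀ _ (snd_ne_zero hy hy0)]
    · have hx0 : x 0 ≠ 0 := fun hx0 =>
        snd_ne_zero hx hx0 (by simpa [hx0, hy0] using h.symm)
      refine ⟨Units.mk0 (x 0 / y 0) (div_ne_zero hx0 hy0), ?_⟩
      refine funext (Fin.forall_fin_two.mpr ⟨?_, ?_⟩)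
      · simp [div_mul_cancel₀ _ hy0]
      · simp only [Units.smul_mk0, Pi.smul_apply, smul_eq_mul]
        field_simp
        linear_combination h

/-- `G : Type` because `FreeGroup.injective_lift_of_ping_pong` puts the group in the universe of
the index type, here `ℕ`. -/
theorem FreeGroup.injective_lift_conj_pow_of_ping_pong {G : Type} {α : Type*} [Group G]
    [MulAction G α] (a b : G) {X Y Z : Set α} (hX : X.Nonempty) (hXY : Disjoint X Y) (hXZ : Disjoint X Z)
    (hYZ : Disjoint Y Z) (ha : a • (X ∪ Y ∪ Z) ⊆ Z) (hb : b • Yᶜ ⊆ X) (hb' : b⁻¹ • Xᶜ ⊆ Y) :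
    Function.Injective (FreeGroup.lift fun i : ℕ => a ^ i * b * (a ^ i)⁻¹) := by
  have hpow : ∀ k, a ^ (k + 1) • (X ∪ Y) ⊆ Z := by
    intro k
    induction k with
    | zero => simpa using (Set.smul_set_mono Set.subset_union_left).trans ha
    | succ k ih =>
      rw [pow_succ', mul_smul]
      exact (Set.smul_set_mono (ih.trans Set.subset_union_right)).trans ha
  have hdisj {S T : Set α} {i j : ℕ} (hS : Disjoint S Z) (hT : T ⊆ X ∪ Y) (hij : i < j) :
      Disjoint (a ^ i • S) (a ^ j • T) := by
    obtain ⟨k, rfl⟩ := Nat.exists_eq_add_of_lt hij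
    rw [add_assoc, pow_add, mul_smul, Set.disjoint_smul_set]
    exact hS.mono_right ((Set.smul_set_mono hT).trans (hpow k))
  have hconj (i : ℕ) (c : G) {S T : Set α} (h : c • Sᶜ ⊆ T) :
      (a ^ i * c * (a ^ i)⁻¹) • (a ^ i • S)ᶜ ⊆ a ^ i • T := by
    rw [← Set.smul_set_compl, smul_smul, inv_mul_cancel_right, mul_smul]
    exact Set.smul_set_mono h
  refine FreeGroup.injective_lift_of_ping_pong _ (fun i => a ^ i • X) (fun i => a ^ i • Y)
    (fun i => hX.smul_set) ?_ ?_ ?_ (fun i => hconj i b hb) (fun i => ?_)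
  · intro i j hij
    rcases hij.lt_or_gt with h | h
    exacts [hdisj hXZ Set.subset_union_left h, (hdisj hXZ Set.subset_union_left h).symm]
  · intro i j hij
    rcases hij.lt_or_gt with h | h
    exacts [hdisj hYZ Set.subset_union_right h, (hdisj hYZ Set.subset_union_right h).symm]
  · intro i j
    rcases lt_trichotomy i j with h | rfl | h
    exacts [hdisj hXZ Set.subset_union_right h, Set.disjoint_smul_set.mpr hXY,
      (hdisj hYZ Set.subset_union_left h).symm]
  · simpa [mul_assoc] using hconj i b⁻¹ hb'

namespace GaussianInt

/-- Reduction modulo the prime `2 + i`: it sends `i` to `3`, a square root of `-1` in `𝔽₅`. -/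
def modTwoAddI : GaussianInt →+* ZMod 5 := Zsqrtd.lift ⟨3, by decide⟩

theorem dvd_of_modTwoAddI_eq_zero {x : GaussianInt} (h : modTwoAddI x = 0) : ⟨2, 1⟩ ∣ x := by
  have h' : (x.re : ZMod 5) + x.im * 3 = 0 := h
  have h5 : (5 : ℤ) ∣ x.re + 3 * x.im := by
    refine (ZMod.intCast_zmod_eq_zero_iff_dvd _ 5).mp ?_
    push_cast
    linear_combination h'
  obtain ⟨c, hc⟩ := h5
  -- the quotient `x * (2 - i) / 5`, computed with `x.re = 5 * c - 3 * x.im`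
  refine ⟨⟨2 * c - x.im, x.im - c⟩, ?_⟩
  ext <;> simp [Zsqrtd.re_mul, Zsqrtd.im_mul] <;> omega

theorem exists_eq_smul_modTwoAddI_ne_zero {u : Fin 2 → GaussianInt} (hu : u ≠ 0) :
    ∃ (g : GaussianInt) (w : Fin 2 → GaussianInt), u = g • w ∧ modTwoAddI ∘ w ≠ 0 := by
  have hp : ¬IsUnit (⟨2, 1⟩ : GaussianInt) := fun h =>
    absurd (isUnit_zero_iff.mp ((show modTwoAddI ⟨2, 1⟩ = 0 by decide) ▸ h.map modTwoAddI))
      (by decide)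
  obtain ⟨g, w, rfl, hw⟩ := EuclideanDomain.exists_eq_smul_not_dvd hp hu
  refine ⟨g, w, rfl, fun h => hw ⟨?_, ?_⟩⟩ <;>
    exact dvd_of_modTwoAddI_eq_zero (congrFun h _)

theorem conjTranspose_map_toComplex (N : Matrix (Fin 2) (Fin 2) GaussianInt) :
    Nᴴ.map toComplex = (N.map toComplex)ᴴ :=
  conjTranspose_map _ toComplex_star

end GaussianInt

instance : Fact (Nat.Prime 5) := ⟨Nat.prime_five⟩

def gaussianRays : Set (Fin 2 → ℂ) :=
  {v | ∃ (c : ℂ) (u : Fin 2 → GaussianInt), c ≠ 0 ∧ u ≠ 0 ∧ v = c • (toComplex ∘ u)}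

def gaussianRaysOver (ℓ : ℙ (ZMod 5) (Fin 2 → ZMod 5)) : Set (Fin 2 → ℂ) :=
  {v | ∃ (c : ℂ) (u : Fin 2 → GaussianInt) (hu : modTwoAddI ∘ u ≠ 0),
    c ≠ 0 ∧ v = c • (toComplex ∘ u) ∧ mk (ZMod 5) (modTwoAddI ∘ u) hu = ℓ}

theorem gaussianRaysOver_subset (ℓ : ℙ (ZMod 5) (Fin 2 → ZMod 5)) :
    gaussianRaysOver ℓ ⊆ gaussianRays := by
  rintro v ⟨c, u, hu, hc, rfl, -⟩
  exact ⟨c, u, hc, fun h => hu (by simp [h]), rfl⟩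

theorem exists_mem_gaussianRaysOver {v : Fin 2 → ℂ} (hv : v ∈ gaussianRays) :
    ∃ ℓ, v ∈ gaussianRaysOver ℓ := by
  obtain ⟨c, u, hc, hu, rfl⟩ := hv
  obtain ⟨g, w, rfl, hw⟩ := exists_eq_smul_modTwoAddI_ne_zero hu
  have hg : toComplex g ≠ 0 := by
    intro h
    simp [toComplex_eq_zero.mp h] at hu
  refine ⟨_, c * toComplex g, w, hw, mul_ne_zero hc hg, ?_, rfl⟩
  ext j
  simp [mul_assoc]

theorem eq_of_mem_gaussianRaysOver {v : Fin 2 → ℂ} {ℓ ℓ' : ℙ (ZMod 5) (Fin 2 → ZMod 5)}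
    (h : v ∈ gaussianRaysOver ℓ) (h' : v ∈ gaussianRaysOver ℓ') : ℓ = ℓ' := by
  obtain ⟨c, u, hu, hc, rfl, rfl⟩ := h
  obtain ⟨c', u', hu', hc', huu', rfl⟩ := h'
  have hcross : u 0 * u' 1 = u 1 * u' 0 := by
    have h0 : c * toComplex (u 0) = c' * toComplex (u' 0) := by simpa using congrFun huu' 0
    have h1 : c * toComplex (u 1) = c' * toComplex (u' 1) := by simpa using congrFun huu' 1
    apply toComplex_injective
    apply mul_left_cancel₀ (mul_ne_zero hc hc')
    simp only [map_mul]
    linear_combination (c' * toComplex (u' 1)) * h0 - (c' * toComplex (u' 0)) * h1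
  rw [mk_eq_mk_iff_mul_eq_mul]
  simpa using congrArg modTwoAddI hcross

theorem smul_map_toComplex_mulVec (c d : ℂ) (N : Matrix (Fin 2) (Fin 2) GaussianInt)
    (u : Fin 2 → GaussianInt) :
    (c • N.map toComplex) *ᵥ (d • (toComplex ∘ u)) = (c * d) • (toComplex ∘ (N *ᵥ u)) := by
  ext i
  rw [smul_mulVec, mulVec_smul, smul_smul, Pi.smul_apply, Pi.smul_apply, Function.comp_apply,
    RingHom.map_mulVec]

theorem mulVec_mem_gaussianRays {c : ℂ} (hc : c ≠ 0) {N : Matrix (Fin 2) (Fin 2) GaussianInt}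
    (hN : N.det ≠ 0) {v : Fin 2 → ℂ} (hv : v ∈ gaussianRays) :
    (c • N.map toComplex) *ᵥ v ∈ gaussianRays := by
  obtain ⟨d, u, hd, hu, rfl⟩ := hv
  refine ⟨c * d, N *ᵥ u, mul_ne_zero hc hd, fun h => hN ?_, smul_map_toComplex_mulVec ..⟩
  exact exists_mulVec_eq_zero_iff.mp ⟨u, hu, h⟩

/-- `vecMulVec a ![k 1, -k 0]` is the rank-one map `w ↦ det (w, k) • a`, with kernel the line of
`k` and image the line of `a`. -/
theorem mulVec_mem_gaussianRaysOver {c : ℂ} (hc : c ≠ 0) {N : Matrix (Fin 2) (Fin 2) GaussianInt}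
    {k a : Fin 2 → ZMod 5} (hk : k ≠ 0) (ha : a ≠ 0)
    (hN : N.map modTwoAddI = vecMulVec a ![k 1, -k 0])
    {ℓ : ℙ (ZMod 5) (Fin 2 → ZMod 5)} (hℓ : ℓ ≠ mk (ZMod 5) k hk) {v : Fin 2 → ℂ}
    (hv : v ∈ gaussianRaysOver ℓ) :
    (c • N.map toComplex) *ᵥ v ∈ gaussianRaysOver (mk (ZMod 5) a ha) := by
  obtain ⟨d, u, hu, hd, rfl, rfl⟩ := hv
  set δ := modTwoAddI (u 0) * k 1 - modTwoAddI (u 1) * k 0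
  have hδ : δ ≠ 0 := by
    rw [sub_ne_zero]
    exact fun h => hℓ ((mk_eq_mk_iff_mul_eq_mul hu hk).mpr h)
  have hdot : ![k 1, -k 0] ⬝ᵥ (modTwoAddI ∘ u) = δ := by
    simp [dotProduct, Fin.sum_univ_two, δ]
    ring
  have hred : modTwoAddI ∘ (N *ᵥ u) = δ • a := by
    ext i
    rw [Function.comp_apply, RingHom.map_mulVec, hN, vecMulVec_mulVec, op_smul_eq_smul, hdot]
  refine ⟨c * d, N *ᵥ u, hred ▸ smul_ne_zero hδ ha, mul_ne_zero hc hd,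
    smul_map_toComplex_mulVec .., ?_⟩
  simp_rw [mk_eq_mk_iff', hred]
  exact ⟨_, rfl⟩


namespace SU2

theorem smul_def (g : SU2) (v : Fin 2 → ℂ) : g • v = SU2.toMatrix g *ᵥ v := rfl

noncomputable def ofGaussian (N : Matrix (Fin 2) (Fin 2) GaussianInt) (hN : N * Nᴴ = 25)
    (hdet : N.det = 25) : SU2 :=
  ⟨⟨(5⁻¹ : ℂ) • N.map toComplex, by
    rw [mem_unitaryGroup_iff, star_eq_conjTranspose, conjTranspose_smul,
      ← conjTranspose_map_toComplex, smul_mul_smul_comm, ← Matrix.map_mul, hN]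
    ext i j
    fin_cases i <;> fin_cases j <;> norm_num [Matrix.ofNat_apply, map_ofNat]⟩, by
    show ((5⁻¹ : ℂ) • N.map toComplex).det = 1
    rw [det_smul, ← RingHom.mapMatrix_apply, ← RingHom.map_det, hdet]
    norm_num [map_ofNat]⟩

variable {N : Matrix (Fin 2) (Fin 2) GaussianInt} {hN : N * Nᴴ = 25} {hdet : N.det = 25}

theorem toMatrix_ofGaussian_inv :
    SU2.toMatrix (ofGaussian N hN hdet)⁻¹ = (5⁻¹ : ℂ) • Nᴴ.map toComplex := by
  show star ((5⁻¹ : ℂ) • N.map toComplex) = _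
  rw [star_smul, conjTranspose_map_toComplex, star_eq_conjTranspose]
  simp

theorem ofGaussian_mem_stabilizer :
    ofGaussian N hN hdet ∈ MulAction.stabilizer SU2 gaussianRays := by
  have h5 : (5⁻¹ : ℂ) ≠ 0 := by norm_num
  rw [MulAction.mem_stabilizer_set]
  refine fun v => ⟨fun hv => ?_, mulVec_mem_gaussianRays h5 (by rw [hdet]; decide)⟩
  have hdet' : Nᴴ.det ≠ 0 := by rw [det_conjTranspose, hdet]; decide
  have := mulVec_mem_gaussianRays h5 hdet' hv
  rwa [← toMatrix_ofGaussian_inv (hN := hN) (hdet := hdet), ← smul_def, inv_smul_smul] at this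

end SU2


namespace SU2

def numA : Matrix (Fin 2) (Fin 2) GaussianInt := !![⟨3, 4⟩, 0; 0, ⟨3, -4⟩]

def numB : Matrix (Fin 2) (Fin 2) GaussianInt := !![3, 4; -4, 3]

theorem numA_map_modTwoAddI : numA.map modTwoAddI = vecMulVec ![0, 1] ![0, 1] := by decide

theorem numB_map_modTwoAddI : numB.map modTwoAddI = vecMulVec ![3, 1] ![1, -2] := by decide

theorem numB_conjTranspose_map_modTwoAddI :
    numBᴴ.map modTwoAddI = vecMulVec ![2, 1] ![4, -2] := by decide

theorem numA_mul_conjTranspose : numA * numAᴴ = 25 := by decide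

theorem det_numA : numA.det = 25 := by decide

noncomputable def a : MulAction.stabilizer SU2 gaussianRays :=
  ⟨ofGaussian numA numA_mul_conjTranspose det_numA, ofGaussian_mem_stabilizer⟩

theorem numB_mul_conjTranspose : numB * numBᴴ = 25 := by decide

theorem det_numB : numB.det = 25 := by decide

noncomputable def b : MulAction.stabilizer SU2 gaussianRays :=
  ⟨ofGaussian numB numB_mul_conjTranspose det_numB, ofGaussian_mem_stabilizer⟩

def raysOver (ℓ : ℙ (ZMod 5) (Fin 2 → ZMod 5)) : Set gaussianRays :=
  Subtype.val ⁻¹' gaussianRaysOver ℓ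

theorem disjoint_raysOver {ℓ ℓ' : ℙ (ZMod 5) (Fin 2 → ZMod 5)} (h : ℓ ≠ ℓ') :
    Disjoint (raysOver ℓ) (raysOver ℓ') :=
  Set.disjoint_left.mpr fun _ hx hx' => h (eq_of_mem_gaussianRaysOver hx hx')

theorem exists_mem_raysOver_ne {ℓ : ℙ (ZMod 5) (Fin 2 → ZMod 5)} {x : gaussianRays}
    (hx : x ∉ raysOver ℓ) : ∃ ℓ' ≠ ℓ, x ∈ raysOver ℓ' := by
  obtain ⟨ℓ', hℓ'⟩ := exists_mem_gaussianRaysOver x.2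
  exact ⟨ℓ', fun h => hx (h ▸ hℓ'), hℓ'⟩

def lineX : ℙ (ZMod 5) (Fin 2 → ZMod 5) := mk _ ![3, 1] (by decide)
def lineY : ℙ (ZMod 5) (Fin 2 → ZMod 5) := mk _ ![2, 1] (by decide)
def lineZ : ℙ (ZMod 5) (Fin 2 → ZMod 5) := mk _ ![0, 1] (by decide)
def lineW : ℙ (ZMod 5) (Fin 2 → ZMod 5) := mk _ ![-1, 0] (by decide)

theorem a_smul_mem_raysOver {ℓ} (hℓ : ℓ ≠ lineW) {x : gaussianRays}
    (hx : x ∈ raysOver ℓ) : a • x ∈ raysOver lineZ :=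
  mulVec_mem_gaussianRaysOver (by norm_num) _ _ numA_map_modTwoAddI hℓ hx

theorem b_smul_mem_raysOver {ℓ} (hℓ : ℓ ≠ lineY) {x : gaussianRays}
    (hx : x ∈ raysOver ℓ) : b • x ∈ raysOver lineX :=
  mulVec_mem_gaussianRaysOver (by norm_num) _ _ numB_map_modTwoAddI hℓ hx

theorem b_inv_smul_mem_raysOver {ℓ} (hℓ : ℓ ≠ lineX) {x : gaussianRays}
    (hx : x ∈ raysOver ℓ) : b⁻¹ • x ∈ raysOver lineY := by
  have hℓ' : ℓ ≠ mk (ZMod 5) ![2, 4] (by decide) := by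
    convert hℓ using 1
    rw [lineX, mk_eq_mk_iff_mul_eq_mul]; decide
  show toMatrix (ofGaussian numB numB_mul_conjTranspose det_numB)⁻¹ *ᵥ x.1 ∈ gaussianRaysOver lineY
  rw [toMatrix_ofGaussian_inv]
  exact mulVec_mem_gaussianRaysOver (by norm_num) _ _ numB_conjTranspose_map_modTwoAddI hℓ' hx

theorem lines_ne : lineX ≠ lineY ∧ lineX ≠ lineZ ∧ lineY ≠ lineZ ∧
    lineX ≠ lineW ∧ lineY ≠ lineW ∧ lineZ ≠ lineW := by
  simp only [lineX, lineY, lineZ, lineW, Ne, mk_eq_mk_iff_mul_eq_mul]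
  decide

theorem injective_lift_conj_pow :
    Function.Injective (FreeGroup.lift fun i : ℕ => a ^ i * b * (a ^ i)⁻¹) := by
  obtain ⟨hXY, hXZ, hYZ, hX, hY, hZ⟩ := lines_ne
  have hx : (1 : ℂ) • (toComplex ∘ ![3, 1]) ∈ gaussianRaysOver lineX :=
    ⟨1, ![3, 1], by decide, one_ne_zero, rfl, by rw [lineX, mk_eq_mk_iff_mul_eq_mul]; decide⟩
  refine FreeGroup.injective_lift_conj_pow_of_ping_pong a b
    ⟨⟨_, gaussianRaysOver_subset _ hx⟩, hx⟩ (disjoint_raysOver hXY) (disjoint_raysOver hXZ)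
    (disjoint_raysOver hYZ) ?_ ?_ ?_
  · rintro _ ⟨x, (⟨hxX | hxY⟩ | hxZ), rfl⟩
    exacts [a_smul_mem_raysOver hX hxX, a_smul_mem_raysOver hY hxY, a_smul_mem_raysOver hZ hxZ]
  · rintro _ ⟨x, hx, rfl⟩
    obtain ⟨ℓ, hℓ, hxℓ⟩ := exists_mem_raysOver_ne hx
    exact b_smul_mem_raysOver hℓ hxℓ
  · rintro _ ⟨x, hx, rfl⟩
    obtain ⟨ℓ, hℓ, hxℓ⟩ := exists_mem_raysOver_ne hx
    exact b_inv_smul_mem_raysOver hℓ hxℓ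

end SU2

/-- For every `n`, SU(2) contains a subgroup freely generated by `n` elements:
the free group on `n` generators embeds into SU(2). -/
theorem freeGroup_embeds_into_su2 (n : ℕ) :
    ∃ φ : FreeGroup (Fin n) →* SU2, Function.Injective φ :=
  ⟨(MulAction.stabilizer SU2 gaussianRays).subtype.comp
      ((FreeGroup.lift fun i : ℕ => SU2.a ^ i * SU2.b * (SU2.a ^ i)⁻¹).comp
        (FreeGroup.map Fin.val)),
    Subtype.val_injective.comp
      (SU2.injective_lift_conj_pow.comp (FreeGroup.map_injective Fin.val_injective))⟩
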